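/- arXiv:0903.4278 — 6 statements merged into one kernel-verified Lean document; each statement's English description precedes it below -/
import Mathlib

section
/- Let Ψ* be the ℂ-algebra endomorphism of ℂ[x,y,z,t] fixing x, z, t and sending y to (1-x)y - x - z² - t³. Then Ψ*(x²y + z² + x + t³) = (1-x)(x²y + (1+x)(z²+x+t³)). -/
open MvPolynomial

/-- The endomorphism Ψ* of ℂ[x,y,z,t] fixing x,z,t and sending y to (1-x)y - x - z² - t³. -/
noncomputable def PsiStar : MvPolynomial (Fin 4) ℂ →ₐ[ℂ] MvPolynomial (Fin 4) ℂ :=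
  aeval ![X 0, (1 - X 0) * X 1 - X 0 - X 2 ^ 2 - X 3 ^ 3, X 2, X 3]

@[simp]
lemma PsiStar_X_zero : PsiStar (X 0) = X 0 := aeval_X _ _

@[simp]
lemma PsiStar_X_one : PsiStar (X 1) = (1 - X 0) * X 1 - X 0 - X 2 ^ 2 - X 3 ^ 3 := aeval_X _ _

@[simp]
lemma PsiStar_X_two : PsiStar (X 2) = X 2 := aeval_X _ _

@[simp]
lemma PsiStar_X_three : PsiStar (X 3) = X 3 := aeval_X _ _

theorem stmt1 :
    PsiStar (X 0 ^ 2 * X 1 + X 2 ^ 2 + X 0 + X 3 ^ 3) =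
      (1 - X 0) * (X 0 ^ 2 * X 1 + (1 + X 0) * (X 2 ^ 2 + X 0 + X 3 ^ 3)) := by
  simp only [map_add, map_mul, map_pow, PsiStar_X_zero, PsiStar_X_one, PsiStar_X_two,
    PsiStar_X_three]
  ring
end

section
/- For every c ∈ ℂ, the ℂ-algebra ℂ[x,y,z,t]/(x²y + (1+x)(z²+x+t³) - c) is isomorphic to ℂ[x,y,z,t]/(x²y + z² + (1+c)x + t³ - c). -/
/-!
Write `x, y, z, t` for `X 0, X 1, X 2, X 3`; `relQ c` is `Q - c` and `relF c` is `F_c`.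
The substitution `y ↦ (1 + x) y + c` sends `Q - c` to `(1 + x) F_c`, and `y ↦ (1 - x) y - z² - x - t³`
sends `F_c` to `(1 - x) (Q - c)`. Neither is an automorphism of `ℂ[x,y,z,t]`, since `1 ± x` is not a
unit, but both composites move `y` only by a multiple of the relevant relation (`y ↦ y - (Q - c)`,
resp. `y ↦ y - F_c`), so they descend to mutually inverse maps of the quotients.
-/

open MvPolynomial

namespace Ideal

variable {R A B : Type*} [CommSemiring R] [CommRing A] [Algebra R A] [CommRing B] [Algebra R B]

noncomputable def quotientAlgEquivOfInverseModulo (I : Ideal A) (J : Ideal B)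
    (f : A →ₐ[R] B) (g : B →ₐ[R] A) (hf : I ≤ J.comap f) (hg : J ≤ I.comap g)
    (hgf : (Quotient.mkₐ R I).comp (g.comp f) = Quotient.mkₐ R I)
    (hfg : (Quotient.mkₐ R J).comp (f.comp g) = Quotient.mkₐ R J) :
    (A ⧸ I) ≃ₐ[R] (B ⧸ J) :=
  AlgEquiv.ofAlgHom (quotientMapₐ J f hf) (quotientMapₐ I g hg)
    (Quotient.algHom_ext R <| by
      rw [AlgHom.comp_assoc, quotient_map_comp_mkₐ, ← AlgHom.comp_assoc, quotient_map_comp_mkₐ,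
        AlgHom.comp_assoc, hfg, AlgHom.id_comp])
    (Quotient.algHom_ext R <| by
      rw [AlgHom.comp_assoc, quotient_map_comp_mkₐ, ← AlgHom.comp_assoc, quotient_map_comp_mkₐ,
        AlgHom.comp_assoc, hgf, AlgHom.id_comp])

end Ideal

namespace MvPolynomial

variable {R : Type*} [CommRing R] (c : R)

noncomputable def relQ : MvPolynomial (Fin 4) R :=
  X 0 ^ 2 * X 1 + (1 + X 0) * (X 2 ^ 2 + X 0 + X 3 ^ 3) - C c

noncomputable def relF : MvPolynomial (Fin 4) R :=
  X 0 ^ 2 * X 1 + X 2 ^ 2 + (1 + C c) * X 0 + X 3 ^ 3 - C c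

noncomputable def yShift : MvPolynomial (Fin 4) R →ₐ[R] MvPolynomial (Fin 4) R :=
  aeval ![X 0, (1 + X 0) * X 1 + C c, X 2, X 3]

variable (R) in
noncomputable def yUnshift : MvPolynomial (Fin 4) R →ₐ[R] MvPolynomial (Fin 4) R :=
  aeval ![X 0, (1 - X 0) * X 1 - X 2 ^ 2 - X 0 - X 3 ^ 3, X 2, X 3]

theorem yShift_relQ : yShift c (relQ c) = (1 + X 0) * relF c := by
  simp only [yShift, relQ, relF, aeval_X, map_add, map_sub, map_mul, map_one, map_pow, algHom_C,
    algebraMap_eq, Matrix.cons_val_zero, Matrix.cons_val_one, Matrix.cons_val]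
  ring

theorem yUnshift_relF : yUnshift R (relF c) = (1 - X 0) * relQ c := by
  simp only [yUnshift, relQ, relF, aeval_X, map_add, map_sub, map_mul, map_one, map_pow,
    algHom_C, algebraMap_eq, Matrix.cons_val_zero, Matrix.cons_val_one, Matrix.cons_val]
  ring

theorem yUnshift_yShift_X_one : yUnshift R (yShift c (X 1)) = X 1 - relQ c := by
  simp only [yShift, yUnshift, relQ, aeval_X, map_add, map_mul, map_one, algHom_C, algebraMap_eq,
    Matrix.cons_val_zero, Matrix.cons_val_one]
  ring

theorem yShift_yUnshift_X_one : yShift c (yUnshift R (X 1)) = X 1 - relF c := by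
  simp only [yShift, yUnshift, relF, aeval_X, map_sub, map_mul, map_one, map_pow,
    Matrix.cons_val_zero, Matrix.cons_val_one, Matrix.cons_val]
  ring

theorem yUnshift_yShift_X_sub_mem (i : Fin 4) :
    yUnshift R (yShift c (X i)) - X i ∈ Ideal.span {relQ c} := by
  match i with
  | 1 =>
    rw [yUnshift_yShift_X_one, sub_sub_cancel_left]
    exact neg_mem (Ideal.mem_span_singleton_self _)
  | 0 | 2 | 3 => simp [yShift, yUnshift]

theorem yShift_yUnshift_X_sub_mem (i : Fin 4) :
    yShift c (yUnshift R (X i)) - X i ∈ Ideal.span {relF c} := by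
  match i with
  | 1 =>
    rw [yShift_yUnshift_X_one, sub_sub_cancel_left]
    exact neg_mem (Ideal.mem_span_singleton_self _)
  | 0 | 2 | 3 => simp [yShift, yUnshift]

noncomputable def quotientRelQAlgEquivQuotientRelF :
    (MvPolynomial (Fin 4) R ⧸ Ideal.span {relQ c}) ≃ₐ[R]
      (MvPolynomial (Fin 4) R ⧸ Ideal.span {relF c}) :=
  Ideal.quotientAlgEquivOfInverseModulo _ _ (yShift c) (yUnshift R)
    (by
      rw [Ideal.span_singleton_le_iff_mem, Ideal.mem_comap, yShift_relQ]
      exact Ideal.mul_mem_left _ _ (Ideal.mem_span_singleton_self _))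
    (by
      rw [Ideal.span_singleton_le_iff_mem, Ideal.mem_comap, yUnshift_relF]
      exact Ideal.mul_mem_left _ _ (Ideal.mem_span_singleton_self _))
    (algHom_ext fun i => Ideal.Quotient.eq.2 (yUnshift_yShift_X_sub_mem c i))
    (algHom_ext fun i => Ideal.Quotient.eq.2 (yShift_yUnshift_X_sub_mem c i))

end MvPolynomial

theorem stmt4 (c : ℂ) :
    Nonempty
      ((MvPolynomial (Fin 4) ℂ ⧸
          Ideal.span {X 0 ^ 2 * X 1 + (1 + X 0) * (X 2 ^ 2 + X 0 + X 3 ^ 3) - C c}) ≃ₐ[ℂ]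
        (MvPolynomial (Fin 4) ℂ ⧸
          Ideal.span {X 0 ^ 2 * X 1 + X 2 ^ 2 + (1 + C c) * X 0 + X 3 ^ 3 - C c})) :=
  ⟨quotientRelQAlgEquivQuotientRelF c⟩
end

section
/- Every ℂ-algebra automorphism of ℂ[z,t] that fixes the polynomial z² + t³ is one of exactly six maps, each of the form z ↦ εz, t ↦ ωt where ε² = 1 and ω³ = 1. -/
/-!
An automorphism `ψ` of `K[t][z]` fixing `f = z² + t³` acts on the coordinate ring of the cusp
`f = 0`, whose normalization is `s ↦ (s³, -s²)`. Since `K[s]` is integrally closed, the images of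
`z` and `t` in `K[s]` are `g³` and `-g²` for one `g`, so `ψ` acts on the cusp by `s ↦ g(s)`;
surjectivity of `ψ` forces `g` to be linear, and the image of the cusp ring having no linear
term forces `g = γ s`. Hence `ψ z = γ³ z + f R` and `ψ t = γ² t + f S`. The Mason–Stothers
theorem over `K(t)`, applied to `(ψ z)² + (ψ t)³ = z² + t³`, bounds the `z`-degrees of `ψ z` and
`ψ t` by 3 and 2, so `R` is linear and `S` constant in `z`; the value and the `z`-derivative of the
identity at `z = 0` then kill `R` and `S`.
-/

noncomputable section

open Polynomial

theorem exists_eq_pow_three_and_eq_sq_of_sq_eq_pow_three {R : Type*} [CommRing R] [IsDomain R]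
    [IsIntegrallyClosed R] {u w : R} (h : u ^ 2 = w ^ 3) : ∃ g, u = g ^ 3 ∧ w = g ^ 2 := by
  by_cases hw : w = 0
  · exact ⟨0, by simpa [hw] using h, by simp [hw]⟩
  obtain ⟨g, rfl⟩ : w ∣ u :=
    (IsIntegrallyClosed.pow_dvd_pow_iff two_ne_zero).mp ⟨w, by rw [h]; ring⟩
  have hg : w = g ^ 2 := mul_left_cancel₀ (pow_ne_zero 2 hw) (by linear_combination h.symm)
  exact ⟨g, by rw [hg]; ring, hg⟩

theorem eq_zero_and_pow_eq_one_of_mul_add_C_pow_eq_one {R : Type*} [CommRing R] [IsDomain R]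
    {q s : R[X]} {b : R} {n : ℕ} (hn : n ≠ 0) (hq : q.natDegree ≠ 0) (h : (q * s + C b) ^ n = 1) :
    s = 0 ∧ b ^ n = 1 := by
  have hs : s = 0 := by
    by_contra hs
    have := natDegree_eq_zero_of_isUnit (IsUnit.of_pow_eq_one h hn)
    rw [natDegree_add_C, natDegree_mul (by rintro rfl; simp at hq) hs] at this
    omega
  subst hs
  exact ⟨rfl, C_injective (by simpa using h)⟩

section Mason

variable {K : Type*} [Field K]

lemma squarefree_X_sq_add_C [NeZero (2 : K)] {κ : K} (hκ : κ ≠ 0) : Squarefree (X ^ 2 + C κ) := by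
  simpa using (separable_X_pow_sub_C (n := 2) (-κ) two_ne_zero (neg_ne_zero.mpr hκ)).squarefree

lemma isCoprime_of_squarefree_sq_add_pow_three {P Q : K[X]} (h : Squarefree (P ^ 2 + Q ^ 3)) :
    IsCoprime P Q := by
  refine isRelPrime_iff_isCoprime.mp fun d hdP hdQ => h d ?_
  have hd2 : ∀ {W : K[X]}, d ∣ W → d * d ∣ W ^ 2 := fun {W} hW => sq W ▸ mul_dvd_mul hW hW
  exact dvd_add (hd2 hdP) ((hd2 hdQ).trans (pow_dvd_pow Q (by norm_num)))

open UniqueFactorizationMonoid in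
lemma natDegree_radical_sq_mul_pow_three_mul_le [DecidableEq K] (P Q f : K[X]) :
    (radical (P ^ 2 * Q ^ 3 * f)).natDegree ≤ P.natDegree + Q.natDegree + f.natDegree := by
  have hdvd : radical (P ^ 2 * Q ^ 3 * f) ∣ radical P * radical Q * radical f :=
    calc radical (P ^ 2 * Q ^ 3 * f) ∣ radical (P ^ 2 * Q ^ 3) * radical f := radical_mul_dvd
      _ ∣ radical (P ^ 2) * radical (Q ^ 3) * radical f := mul_dvd_mul_right radical_mul_dvd _
      _ = radical P * radical Q * radical f := by
        rw [radical_pow P two_ne_zero, radical_pow Q three_ne_zero]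
  calc (radical (P ^ 2 * Q ^ 3 * f)).natDegree
      ≤ (radical P * radical Q * radical f).natDegree := natDegree_le_of_dvd hdvd (by simp)
    _ = (radical P).natDegree + (radical Q).natDegree + (radical f).natDegree := by
      rw [natDegree_mul (by simp) (by simp), natDegree_mul (by simp) (by simp)]
    _ ≤ P.natDegree + Q.natDegree + f.natDegree := by
      gcongr <;> exact natDegree_radical_le

theorem natDegree_le_of_sq_add_pow_three_eq [NeZero (2 : K)] {κ : K}
    (hκ : κ ≠ 0) {P Q : K[X]} (h : P ^ 2 + Q ^ 3 = X ^ 2 + C κ) :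
    P.natDegree ≤ 3 ∧ Q.natDegree ≤ 2 := by
  classical
  have hdeg := congrArg natDegree h
  rw [natDegree_X_pow_add_C] at hdeg
  by_cases hP : P = 0
  · rw [hP, zero_pow two_ne_zero, zero_add, natDegree_pow] at hdeg
    omega
  by_cases hQ : Q = 0
  · rw [hQ, zero_pow three_ne_zero, add_zero, natDegree_pow] at hdeg
    exact ⟨by omega, by simp [hQ]⟩
  have hf : X ^ 2 + C κ ≠ 0 := (monic_X_pow_add_C κ two_ne_zero).ne_zero
  have hrad := natDegree_radical_sq_mul_pow_three_mul_le P Q (-(X ^ 2 + C κ))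
  rw [natDegree_neg, natDegree_X_pow_add_C] at hrad
  rcases Polynomial.abc (pow_ne_zero 2 hP) (pow_ne_zero 3 hQ) (neg_ne_zero.mpr hf)
      (isCoprime_of_squarefree_sq_add_pow_three (h ▸ squarefree_X_sq_add_C hκ)).pow
      (by rw [h]; ring) with ⟨h1, h2, -⟩ | ⟨-, -, h0⟩
  · rw [natDegree_pow] at h1 h2
    omega
  · simp [one_add_one_eq_two, two_ne_zero] at h0

end Mason

section Cusp

variable {R : Type*} [CommRing R]

-- In `R[X][X]` the outer variable `X` plays `z` and `C X` plays `t`.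
def cusp : R[X][X] := X ^ 2 + C (X ^ 3)

def cuspParam : R[X][X] →ₐ[R] R[X] :=
  eval₂AlgHom (aeval (-X ^ 2)) (X ^ 3) fun _ => Commute.all _ _

@[simp] lemma cuspParam_X : cuspParam (X : R[X][X]) = X ^ 3 := by
  simp [cuspParam]

lemma cuspParam_C (p : R[X]) : cuspParam (C p) = expand R 2 (p.comp (-X)) := by
  simp [cuspParam, expand_eq_comp_X_pow, comp_assoc, ← comp_eq_aeval]

@[simp] lemma cuspParam_C_X : cuspParam (C X : R[X][X]) = -X ^ 2 := by
  simp [cuspParam]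

lemma cusp_eq : (cusp : R[X][X]) = X ^ 2 + C X ^ 3 := by rw [cusp, C_pow]

lemma monic_cusp [Nontrivial R] : (cusp : R[X][X]).Monic := monic_X_pow_add_C _ two_ne_zero

lemma natDegree_cusp [Nontrivial R] : (cusp : R[X][X]).natDegree = 2 := natDegree_X_pow_add_C

lemma cuspParam_cusp : cuspParam (cusp : R[X][X]) = 0 := by
  simp only [cusp, map_add, map_pow, cuspParam_X, cuspParam_C, X_comp, map_neg, expand_X]
  ring

lemma coeff_one_cuspParam (W : R[X][X]) : (cuspParam W).coeff 1 = 0 := by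
  induction W using Polynomial.induction_on' with
  | add p q hp hq => rw [map_add, coeff_add, hp, hq, add_zero]
  | monomial n p =>
    rw [← C_mul_X_pow_eq_monomial, map_mul, map_pow, cuspParam_C, cuspParam_X, ← pow_mul]
    rcases n with _ | n
    · simp [coeff_expand]
    · rw [coeff_mul_X_pow', if_neg (by omega)]

lemma expand_two_mul_X_pow_three_add_expand_two_eq_zero_iff {a b : R[X]} :
    expand R 2 a * X ^ 3 + expand R 2 b = 0 ↔ a = 0 ∧ b = 0 := by
  refine ⟨fun h => ?_, by rintro ⟨rfl, rfl⟩; simp⟩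
  have ha : a = 0 := by
    ext k
    have := congrArg (coeff · (2 * k + 3)) h
    simp only [coeff_add, coeff_mul_X_pow, coeff_zero] at this
    rwa [mul_comm, coeff_expand_mul two_pos, coeff_expand two_pos, if_neg (by omega),
      add_zero] at this
  subst ha
  simpa [expand_eq_zero two_pos] using h

theorem cusp_dvd_of_cuspParam_eq_zero [Nontrivial R] {W : R[X][X]} (h : cuspParam W = 0) :
    cusp ∣ W := by
  have hr : cuspParam (W %ₘ cusp) = 0 := by
    rwa [← modByMonic_add_div W cusp, map_add, map_mul, cuspParam_cusp, zero_mul,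
      add_zero] at h
  have hdeg : (W %ₘ cusp).natDegree ≤ 1 := by
    have := natDegree_modByMonic_lt W monic_cusp fun h1 => by
      simpa [h1] using natDegree_cusp (R := R)
    rw [natDegree_cusp] at this
    omega
  rw [eq_X_add_C_of_natDegree_le_one hdeg, map_add, map_mul, cuspParam_C, cuspParam_C,
    cuspParam_X, expand_two_mul_X_pow_three_add_expand_two_eq_zero_iff,
    comp_neg_X_eq_zero_iff, comp_neg_X_eq_zero_iff] at hr
  rw [← modByMonic_eq_zero_iff_dvd monic_cusp, eq_X_add_C_of_natDegree_le_one hdeg, hr.1, hr.2]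
  simp

lemma natDegree_le_of_natDegree_cusp_mul_le [Nontrivial R] {W : R[X][X]} {n : ℕ}
    (h : (cusp * W).natDegree ≤ n + 2) : W.natDegree ≤ n := by
  rcases eq_or_ne W 0 with rfl | hW
  · simp
  rw [monic_cusp.natDegree_mul' hW, natDegree_cusp] at h
  omega

theorem eq_of_sq_add_pow_three_eq_cusp [IsDomain R] [NeZero (2 : R)] {a b : R} (ha : a ≠ 0)
    {r₁ r₀ s : R[X]}
    (h : (C (C a) * X + cusp * (C r₁ * X + C r₀)) ^ 2 + (C (C b * X) + cusp * C s) ^ 3 = cusp) :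
    a ^ 2 = 1 ∧ b ^ 3 = 1 ∧ r₁ = 0 ∧ r₀ = 0 ∧ s = 0 := by
  have h0 : (X ^ 3 * r₀) ^ 2 + (C b * X + X ^ 3 * s) ^ 3 = X ^ 3 := by
    simpa [cusp] using congrArg (eval 0) h
  have h1 : 2 * (X ^ 3 * r₀) * (C a + X ^ 3 * r₁) = 0 := by
    simpa [cusp, derivative_pow, derivative_mul] using congrArg (fun p => (derivative p).eval 0) h
  have hr₀ : r₀ = 0 := by
    have h2 : (2 : R[X]) ≠ 0 := map_ofNat (C : R →+* R[X]) 2 ▸ C_ne_zero.mpr two_ne_zero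
    have ha' : C a + X ^ 3 * r₁ ≠ 0 := fun h' => ha (by simpa using congrArg (eval 0) h')
    simpa [h2, ha'] using h1
  subst hr₀
  obtain ⟨rfl, hb⟩ : s = 0 ∧ b ^ 3 = 1 := by
    refine eq_zero_and_pow_eq_one_of_mul_add_C_pow_eq_one three_ne_zero (by simp) (q := X ^ 2) ?_
    refine mul_left_cancel₀ (pow_ne_zero 3 X_ne_zero) ?_
    linear_combination h0
  have hCb : (C (C b * X) : R[X][X]) ^ 3 = C (X ^ 3) := by
    rw [← C_pow, mul_pow, ← C_pow, hb, C_1, one_mul]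
  obtain ⟨hr₁, ha⟩ : C r₁ = 0 ∧ C a ^ 2 = 1 := by
    refine eq_zero_and_pow_eq_one_of_mul_add_C_pow_eq_one two_ne_zero
      (by rw [natDegree_cusp]; simp) (q := cusp) ?_
    refine mul_left_cancel₀ (pow_ne_zero 2 (X_ne_zero (R := R[X]))) ?_
    simp only [cusp, C_0, mul_zero, add_zero] at h ⊢
    linear_combination h - hCb
  exact ⟨C_injective (by simpa using ha), hb, C_eq_zero.mp hr₁, rfl, rfl⟩

variable {K : Type*} [Field K]

theorem natDegree_le_of_sq_add_pow_three_eq_cusp [NeZero (2 : K)] {P Q : K[X][X]}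
    (h : P ^ 2 + Q ^ 3 = cusp) : P.natDegree ≤ 3 ∧ Q.natDegree ≤ 2 := by
  let ι := algebraMap K[X] (FractionRing K[X])
  have hι : Function.Injective ι := IsFractionRing.injective _ _
  have : NeZero (2 : FractionRing K[X]) :=
    ⟨fun h2 => two_ne_zero (α := K) <| (hι.comp C_injective) <| by
      simpa only [Function.comp_apply, map_ofNat, map_zero] using h2⟩
  have hκ : ι (X ^ 3) ≠ 0 := (map_ne_zero_iff ι hι).mpr (pow_ne_zero 3 X_ne_zero)
  have := natDegree_le_of_sq_add_pow_three_eq hκ (P := P.map ι) (Q := Q.map ι)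
    (by rw [← Polynomial.map_pow, ← Polynomial.map_pow, ← Polynomial.map_add, h, cusp]; simp)
  simpa only [natDegree_map_eq_of_injective hι] using this

theorem exists_cuspParam_comp_eq (φ : K[X][X] →ₐ[K] K[X][X]) (hφ : φ cusp = cusp) :
    ∃ g : K[X], ∀ W, cuspParam (φ W) = (cuspParam W).comp g := by
  have h : cuspParam (φ X) ^ 2 = (-cuspParam (φ (C X))) ^ 3 := by
    have := congrArg cuspParam hφ
    rw [cuspParam_cusp, cusp_eq] at this
    simp only [map_add, map_pow] at this
    linear_combination this
  obtain ⟨g, hu, hv⟩ := exists_eq_pow_three_and_eq_sq_of_sq_eq_pow_three h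
  refine ⟨g, fun W => ?_⟩
  suffices cuspParam.comp φ = (aeval g).comp cuspParam from
    (congrArg (· W) this).trans comp_eq_aeval.symm
  refine algHom_ext' (algHom_ext ?_) ?_
  · simp [← hv]
  · simp [hu]

variable (ψ : K[X][X] ≃ₐ[K] K[X][X])

theorem natDegree_eq_one_of_cuspParam_comp_eq {g : K[X]}
    (hg : ∀ W, cuspParam (ψ W) = (cuspParam W).comp g) : g.natDegree = 1 := by
  have h3 := congrArg natDegree (hg (ψ.symm X))
  have h2 := congrArg natDegree (hg (ψ.symm (C X)))
  simp only [AlgEquiv.apply_symm_apply, cuspParam_X, cuspParam_C_X, natDegree_comp,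
    natDegree_neg, natDegree_X_pow] at h3 h2
  exact Nat.dvd_one.mp <| by
    simpa using Nat.dvd_gcd (Dvd.intro_left _ h2.symm) (Dvd.intro_left _ h3.symm)

theorem exists_ne_zero_cuspParam_apply_eq [NeZero (2 : K)] (hψ : ψ cusp = cusp) :
    ∃ γ : K, γ ≠ 0 ∧ cuspParam (ψ X) = cuspParam (C (C (γ ^ 3)) * X) ∧
      cuspParam (ψ (C X)) = cuspParam (C (C (γ ^ 2) * X)) := by
  obtain ⟨g, hg⟩ : ∃ g : K[X], ∀ W, cuspParam (ψ W) = (cuspParam W).comp g :=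
    exists_cuspParam_comp_eq ψ.toAlgHom hψ
  have hdeg := natDegree_eq_one_of_cuspParam_comp_eq ψ hg
  set γ := g.coeff 1
  set δ := g.coeff 0
  have hlin : g = C γ * X + C δ := eq_X_add_C_of_natDegree_le_one hdeg.le
  have hγ : γ ≠ 0 := by
    rintro hγ
    rw [hlin, hγ, C_0, zero_mul, zero_add, natDegree_C] at hdeg
    exact zero_ne_one hdeg
  have hδ : δ = 0 := by
    have h1 := coeff_one_cuspParam (ψ (C X))
    have hsq : (C γ * X + C δ) ^ 2 = C (γ ^ 2) * X ^ 2 + C (2 * γ * δ) * X + C (δ ^ 2) := by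
      simp only [map_mul, map_pow, map_ofNat]; ring
    rw [hg, cuspParam_C_X, hlin, neg_comp, pow_comp, X_comp, hsq] at h1
    simp only [coeff_neg, coeff_add, coeff_C_mul, coeff_X_pow, coeff_X_one, coeff_C] at h1
    simpa [hγ, two_ne_zero] using h1
  have hgX : g = C γ * X := by rw [hlin, hδ, C_0, add_zero]
  refine ⟨γ, hγ, ?_, ?_⟩
  · rw [hg, hgX]
    simp only [cuspParam_X, pow_comp, X_comp, map_pow, map_mul, cuspParam_C, C_comp, expand_C]
    ring
  · rw [hg, hgX]
    simp only [cuspParam_C, X_comp, map_neg, expand_X, neg_comp, pow_comp, map_pow, map_mul,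
      C_comp, expand_C, mul_neg, neg_inj]
    ring

theorem exists_apply_X_eq_of_apply_cusp_eq [NeZero (2 : K)] (hψ : ψ cusp = cusp) :
    ∃ ε ω : K, ε ^ 2 = 1 ∧ ω ^ 3 = 1 ∧ ψ X = C (C ε) * X ∧ ψ (C X) = C (C ω * X) := by
  have hPQ : ψ X ^ 2 + ψ (C X) ^ 3 = cusp := by
    rw [← map_pow, ← map_pow, ← map_add, ← cusp_eq, hψ]
  obtain ⟨γ, hγ, hP, hQ⟩ := exists_ne_zero_cuspParam_apply_eq ψ hψ
  obtain ⟨R, hR⟩ := cusp_dvd_of_cuspParam_eq_zero (W := ψ X - C (C (γ ^ 3)) * X)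
    (by rw [map_sub, hP, sub_self])
  obtain ⟨S, hS⟩ := cusp_dvd_of_cuspParam_eq_zero (W := ψ (C X) - C (C (γ ^ 2) * X))
    (by rw [map_sub, hQ, sub_self])
  obtain ⟨hPdeg, hQdeg⟩ := natDegree_le_of_sq_add_pow_three_eq_cusp hPQ
  have hRdeg : R.natDegree ≤ 1 := natDegree_le_of_natDegree_cusp_mul_le <| hR ▸
    (natDegree_sub_le_iff_left ((natDegree_C_mul_le _ _).trans (by simp))).mpr hPdeg
  have hSdeg : S.natDegree ≤ 0 := natDegree_le_of_natDegree_cusp_mul_le <| hS ▸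
    (natDegree_sub_le_iff_left ((natDegree_C _).trans_le zero_le_two)).mpr hQdeg
  rw [sub_eq_iff_eq_add', eq_X_add_C_of_natDegree_le_one hRdeg] at hR
  rw [sub_eq_iff_eq_add', eq_C_of_natDegree_le_zero hSdeg] at hS
  rw [hR, hS] at hPQ
  obtain ⟨hε, hω, hr₁, hr₀, hs⟩ := eq_of_sq_add_pow_three_eq_cusp (pow_ne_zero 3 hγ) hPQ
  refine ⟨γ ^ 3, γ ^ 2, hε, hω, ?_, ?_⟩
  · simpa [hr₁, hr₀] using hR
  · simpa [hs] using hS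

end Cusp

section FinTwo

variable (R : Type*) [CommSemiring R]

def finTwoAlgEquiv : MvPolynomial (Fin 2) R ≃ₐ[R] R[X][X] :=
  (MvPolynomial.finSuccEquiv R 1).trans (mapAlgEquiv (MvPolynomial.uniqueAlgEquiv R (Fin 1)))

@[simp] lemma finTwoAlgEquiv_X_zero : finTwoAlgEquiv R (MvPolynomial.X 0) = X := by
  simp [finTwoAlgEquiv, MvPolynomial.finSuccEquiv_X_zero]

@[simp] lemma finTwoAlgEquiv_X_one : finTwoAlgEquiv R (MvPolynomial.X 1) = C X := by
  rw [finTwoAlgEquiv, AlgEquiv.trans_apply, ← Fin.succ_zero_eq_one,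
    MvPolynomial.finSuccEquiv_X_succ]
  simp

@[simp] lemma finTwoAlgEquiv_C (a : R) : finTwoAlgEquiv R (MvPolynomial.C a) = C (C a) :=
  (finTwoAlgEquiv R).commutes a

lemma finTwoAlgEquiv_symm_X : (finTwoAlgEquiv R).symm X = MvPolynomial.X 0 :=
  (AlgEquiv.symm_apply_eq _).mpr (finTwoAlgEquiv_X_zero R).symm

lemma finTwoAlgEquiv_symm_C_X : (finTwoAlgEquiv R).symm (C X) = MvPolynomial.X 1 :=
  (AlgEquiv.symm_apply_eq _).mpr (finTwoAlgEquiv_X_one R).symm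

end FinTwo

end

open MvPolynomial

/-- Every ℂ-algebra automorphism of ℂ[z,t] fixing z² + t³ is of the form
z ↦ εz, t ↦ ωt with ε² = 1 and ω³ = 1; in particular there are exactly six of them. -/
theorem stmt8 (φ : MvPolynomial (Fin 2) ℂ ≃ₐ[ℂ] MvPolynomial (Fin 2) ℂ)
    (hφ : φ (X 0 ^ 2 + X 1 ^ 3) = X 0 ^ 2 + X 1 ^ 3) :
    ∃ ε ω : ℂ, ε ^ 2 = 1 ∧ ω ^ 3 = 1 ∧ φ (X 0) = C ε * X 0 ∧ φ (X 1) = C ω * X 1 := by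
  set e := finTwoAlgEquiv ℂ
  have he : e (X 0 ^ 2 + X 1 ^ 3) = cusp := by simp [e, cusp_eq]
  obtain ⟨ε, ω, hε, hω, h0, h1⟩ :=
    exists_apply_X_eq_of_apply_cusp_eq ((e.symm.trans φ).trans e) (by simp [← he, hφ])
  rw [AlgEquiv.trans_apply, AlgEquiv.trans_apply, finTwoAlgEquiv_symm_X] at h0
  rw [AlgEquiv.trans_apply, AlgEquiv.trans_apply, finTwoAlgEquiv_symm_C_X] at h1
  refine ⟨ε, ω, hε, hω, e.injective ?_, e.injective ?_⟩
  · rw [h0, map_mul e, finTwoAlgEquiv_C, finTwoAlgEquiv_X_zero]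
  · rw [h1, map_mul e, finTwoAlgEquiv_C, finTwoAlgEquiv_X_one, Polynomial.C_mul]
end

section
/- Let r ∈ ℂ[z,t] and let φ be a ℂ[x]-algebra automorphism of ℂ[x][z,t] with φ(z) ≡ z + x·f and φ(t) ≡ t + x·g modulo (x²) for some f, g ∈ ℂ[z,t]. Then f_z + g_t = 0, i.e., there exists h ∈ ℂ[z,t] with h_t = f and h_z = -g. -/
/-!
The Jacobian determinant of an automorphism of `R[x][z,t]` over `R[x]` is a unit, hence a constant
of `R` when `R` is a domain. Reducing `φ` modulo `x²` shows that this determinant is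
`1 + x (f_z + g_t)` modulo `x²`, so the divergence `f_z + g_t` vanishes. Over a field of
characteristic zero a divergence-free polynomial vector field is Hamiltonian: integrate `f` in `t`
and correct by a function of `z` alone.
-/

open MvPolynomial
open scoped Polynomial

/-- The inclusion ℂ[z,t] ⊆ ℂ[x][z,t]. -/
noncomputable def liftZT : MvPolynomial (Fin 2) ℂ →+* MvPolynomial (Fin 2) (Polynomial ℂ) :=
  MvPolynomial.map (algebraMap ℂ (Polynomial ℂ))

namespace MvPolynomial

variable {R σ : Type*} [CommRing R]

theorem pderiv_aeval [Fintype σ] (s : σ → MvPolynomial σ R) (i : σ) (p : MvPolynomial σ R) :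
    pderiv i (aeval s p) = ∑ j, aeval s (pderiv j p) * pderiv i (s j) := by
  classical
  induction p using MvPolynomial.induction_on with
  | C a => simp only [aeval_C, algebraMap_eq, pderiv_C, map_zero, zero_mul, Finset.sum_const_zero]
  | add p q hp hq => simp only [map_add, hp, hq, add_mul, Finset.sum_add_distrib]
  | mul_X p n hp =>
    simp only [map_mul, aeval_X, pderiv_mul, hp, map_add, pderiv_X, add_mul, Finset.sum_add_distrib,
      Pi.single_apply, apply_ite (aeval s), map_zero, mul_ite, ite_mul, mul_one, mul_zero,
      zero_mul, Finset.sum_ite_eq, Finset.mem_univ, if_true, Finset.sum_mul]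
    simp only [mul_right_comm _ (s n)]

noncomputable def jacobian (s : σ → MvPolynomial σ R) : Matrix σ σ (MvPolynomial σ R) :=
  Matrix.of fun i j => pderiv j (s i)

theorem isUnit_det_jacobian [Fintype σ] [DecidableEq σ]
    (φ : MvPolynomial σ R ≃ₐ[R] MvPolynomial σ R) :
    IsUnit (jacobian fun i => φ (X i)).det := by
  have hφ : ∀ p, aeval (fun i => φ (X i)) p = φ p := fun p =>
    (DFunLike.congr_fun (aeval_unique φ.toAlgHom) p).symm
  refine Matrix.isUnit_det_of_left_inverse
    (B := (jacobian fun i => φ.symm (X i)).map (aeval fun i => φ (X i))) ?_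
  ext1 i j
  rw [Matrix.mul_apply, Matrix.one_apply]
  simp only [jacobian, Matrix.map_apply, Matrix.of_apply]
  rw [← pderiv_aeval, hφ, AlgEquiv.apply_symm_apply, pderiv_X, Pi.single_apply]

theorem eq_zero_of_X_sq_dvd (c : R) (p : MvPolynomial σ R)
    (h : C (Polynomial.X ^ 2) ∣ C (Polynomial.C c) + C Polynomial.X * map (algebraMap R R[X]) p) :
    p = 0 := by
  rw [C_dvd_iff_dvd_coeff] at h
  ext m
  have hc : (coeff m (C (Polynomial.C c))).coeff 1 = 0 := by
    classical rw [coeff_C]; split_ifs <;> simp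
  simpa [coeff_map, hc] using Polynomial.X_pow_dvd_iff.mp (h m) 1 one_lt_two

theorem exists_det_jacobian_eq_one_add_C_X_mul_sum_pderiv [Fintype σ] [DecidableEq σ]
    (f : σ → MvPolynomial σ R) (q : σ → MvPolynomial σ R[X]) :
    ∃ r, (jacobian fun i => X i + C Polynomial.X * map (algebraMap R R[X]) (f i) +
        C (Polynomial.X ^ 2) * q i).det =
      1 + C Polynomial.X * map (algebraMap R R[X]) (∑ i, pderiv i (f i)) +
        C (Polynomial.X ^ 2) * r := by
  simp only [map_pow]
  set ε : MvPolynomial σ R[X] := C Polynomial.X with hε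
  set L := map (σ := σ) (algebraMap R R[X])
  set A : Matrix σ σ (MvPolynomial σ R[X]) :=
    Matrix.of fun i j => L (pderiv j (f i)) + ε * pderiv j (q i)
  have hJ : jacobian (fun i => X i + ε * L (f i) + ε ^ 2 * q i) = 1 + ε • A := by
    ext1 i j
    simp only [jacobian, A, L, hε, Matrix.of_apply, Matrix.add_apply, Matrix.one_apply,
      Matrix.smul_apply, smul_eq_mul, map_add, pderiv_X, Pi.single_apply, ← map_pow, pderiv_C_mul,
      pderiv_map]
    rw [map_pow]
    ring
  have htr : A.trace = L (∑ i, pderiv i (f i)) + ε * ∑ i, pderiv i (q i) := by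
    simp [Matrix.trace, A, map_sum, Finset.mul_sum, Finset.sum_add_distrib]
  obtain ⟨r, hr⟩ : ∃ r, (1 + ε • A).det = 1 + A.trace * ε + r * ε ^ 2 :=
    ⟨_, Matrix.det_one_add_smul ε A⟩
  refine ⟨∑ i, pderiv i (q i) + r, ?_⟩
  rw [hJ, hr, htr]
  ring

theorem sum_pderiv_eq_zero_of_algEquiv [Fintype σ] [IsDomain R]
    (φ : MvPolynomial σ R[X] ≃ₐ[R[X]] MvPolynomial σ R[X]) (f : σ → MvPolynomial σ R)
    (hφ : ∀ i, φ (X i) - (X i + C Polynomial.X * map (algebraMap R R[X]) (f i)) ∈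
      Ideal.span {C (Polynomial.X ^ 2)}) :
    ∑ i, pderiv i (f i) = 0 := by
  classical
  choose q hq using fun i => Ideal.mem_span_singleton.mp (hφ i)
  have hs : (fun i => φ (X i)) = fun i =>
      X i + C Polynomial.X * map (algebraMap R R[X]) (f i) + C (Polynomial.X ^ 2) * q i := by
    funext i
    linear_combination hq i
  obtain ⟨r, hr⟩ := exists_det_jacobian_eq_one_add_C_X_mul_sum_pderiv f q
  obtain ⟨u, hu, hdet⟩ := isUnit_iff_eq_C_of_isReduced.mp (isUnit_det_jacobian φ)
  obtain ⟨c, -, rfl⟩ := Polynomial.isUnit_iff.mp hu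
  rw [hs, hr] at hdet
  refine neg_eq_zero.mp (eq_zero_of_X_sq_dvd (c - 1) _ ⟨r, ?_⟩)
  rw [map_neg, Polynomial.C_sub, map_sub, Polynomial.C_1, map_one, ← hdet]
  ring

theorem pderiv_pderiv_comm (i j : σ) (p : MvPolynomial σ R) :
    pderiv i (pderiv j p) = pderiv j (pderiv i p) := by
  classical
  obtain rfl | hij := eq_or_ne i j
  · rfl
  induction p using MvPolynomial.induction_on' with
  | add p q hp hq => simp only [map_add, hp, hq]
  | monomial m a =>
    simp only [pderiv_monomial, Finsupp.tsub_apply, Finsupp.single_apply, hij, hij.symm, if_false,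
      tsub_zero]
    rw [tsub_right_comm, mul_right_comm]

variable {K : Type*} [Field K]

noncomputable def antideriv (i : σ) : MvPolynomial σ K →ₗ[K] MvPolynomial σ K :=
  (basisMonomials σ K).constr K fun m => monomial (m + Finsupp.single i 1) (m i + 1 : K)⁻¹

theorem antideriv_monomial (i : σ) (m : σ →₀ ℕ) (a : K) :
    antideriv i (monomial m a) = monomial (m + Finsupp.single i 1) (a / (m i + 1)) := by
  rw [show monomial m a = a • basisMonomials σ K m by
      rw [coe_basisMonomials, smul_monomial, smul_eq_mul, mul_one],
    map_smul, antideriv, Module.Basis.constr_basis, smul_monomial, smul_eq_mul, div_eq_mul_inv]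

theorem pderiv_antideriv [CharZero K] (i : σ) (p : MvPolynomial σ K) :
    pderiv i (antideriv i p) = p := by
  classical
  induction p using MvPolynomial.induction_on' with
  | add p q hp hq => simp only [map_add, hp, hq]
  | monomial m a =>
    rw [antideriv_monomial, pderiv_monomial, add_tsub_cancel_right]
    congr 1
    simp only [Finsupp.add_apply, Finsupp.single_eq_same, Nat.cast_add, Nat.cast_one]
    exact div_mul_cancel₀ _ (Nat.cast_add_one_ne_zero _)

theorem pderiv_antideriv_of_ne {i j : σ} (hij : i ≠ j) (p : MvPolynomial σ K) :
    pderiv j (antideriv i p) = antideriv i (pderiv j p) := by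
  classical
  induction p using MvPolynomial.induction_on' with
  | add p q hp hq => simp only [map_add, hp, hq]
  | monomial m a =>
    rw [antideriv_monomial, pderiv_monomial, pderiv_monomial, antideriv_monomial]
    have hm : m + Finsupp.single i 1 - Finsupp.single j 1 =
        m - Finsupp.single j 1 + Finsupp.single i 1 := by
      ext k
      simp only [Finsupp.add_apply, Finsupp.tsub_apply, Finsupp.single_apply]
      split_ifs <;> subst_vars <;> simp_all
    simp only [hm, Finsupp.add_apply, Finsupp.tsub_apply, Finsupp.single_apply, hij, hij.symm,
      if_false, add_zero, tsub_zero, div_mul_eq_mul_div]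

theorem exists_pderiv_eq_and_pderiv_eq_neg [CharZero K] {i j : σ} (hij : i ≠ j)
    {f g : MvPolynomial σ K} (hfg : pderiv i f + pderiv j g = 0) :
    ∃ h, pderiv j h = f ∧ pderiv i h = -g := by
  set w := pderiv i (antideriv j f) + g
  have hw : pderiv j w = 0 := by
    rw [map_add, pderiv_pderiv_comm, pderiv_antideriv, hfg]
  refine ⟨antideriv j f - antideriv i w, ?_, ?_⟩
  · rw [map_sub, pderiv_antideriv, pderiv_antideriv_of_ne hij, hw, map_zero, sub_zero]
  · rw [map_sub, pderiv_antideriv]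
    ring

end MvPolynomial

theorem stmt9
    (φ : MvPolynomial (Fin 2) (Polynomial ℂ) ≃ₐ[Polynomial ℂ]
      MvPolynomial (Fin 2) (Polynomial ℂ))
    (f g : MvPolynomial (Fin 2) ℂ)
    (hz : φ (X 0) - (X 0 + C Polynomial.X * liftZT f) ∈
      Ideal.span {(C (Polynomial.X ^ 2) : MvPolynomial (Fin 2) (Polynomial ℂ))})
    (ht : φ (X 1) - (X 1 + C Polynomial.X * liftZT g) ∈
      Ideal.span {(C (Polynomial.X ^ 2) : MvPolynomial (Fin 2) (Polynomial ℂ))}) :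
    pderiv 0 f + pderiv 1 g = 0 ∧
      ∃ h : MvPolynomial (Fin 2) ℂ, pderiv 1 h = f ∧ pderiv 0 h = -g := by
  have hdiv : pderiv 0 f + pderiv 1 g = 0 := by
    simpa [Fin.sum_univ_two] using
      sum_pderiv_eq_zero_of_algEquiv φ ![f, g] (Fin.forall_fin_two.2 ⟨hz, ht⟩)
  exact ⟨hdiv, exists_pderiv_eq_and_pderiv_eq_neg (by decide) hdiv⟩
end

section
/- Every polynomial automorphism of the affine plane preserving the cuspidal cubic curve {z² + t³ = 0} and arising as the exponential of a locally nilpotent derivation must be the identity; equivalently, every locally nilpotent derivation D of ℂ[z,t] with D(z²+t³) ∈ (z²+t³) is zero. -/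
/-!
For a locally nilpotent derivation `D` of a domain of characteristic zero, the degree
`deg_D a = max {n | D^[n] a ≠ 0}` is additive on products (look at the top term of the
Leibniz rule) and drops by one under `D`. So `D f ∈ (f)` forces `D f = 0`. For
`f = z² + t³` this reads `2z Dz + 3t² Dt = 0`, whence `Dt = z b` and `Dz = -3/2 t² b`.
If `b ≠ 0`, degrees give `deg z = 2 deg t + deg b + 1` and `deg t = deg z + deg b + 1`,
which is absurd; so `b = 0` and `D = 0`.
-/

open MvPolynomial

namespace Derivation

open Finset

variable {R A : Type*} [CommSemiring R] [CommSemiring A] [Algebra R A] (D : Derivation R A A)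

theorem iterate_apply_mul (n : ℕ) (a b : A) :
    (⇑D)^[n] (a * b) =
      ∑ ij ∈ antidiagonal n, n.choose ij.1 • ((⇑D)^[ij.1] a * (⇑D)^[ij.2] b) := by
  induction n with
  | zero => simp
  | succ n ih =>
    rw [sum_antidiagonal_choose_succ_nsmul (fun i j => (⇑D)^[i] a * (⇑D)^[j] b) n]
    simp only [Function.iterate_succ_apply', ih, map_sum, map_nsmul, leibniz, smul_eq_mul,
      smul_add, sum_add_distrib]
    congr 1
    refine sum_congr rfl fun ij hij => ?_
    rw [n.choose_symm_of_eq_add (mem_antidiagonal.1 hij).symm, mul_comm]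

theorem iterate_eq_zero_of_le {a : A} {m n : ℕ}
    (h : (⇑D)^[m] a = 0) (hmn : m ≤ n) : (⇑D)^[n] a = 0 := by
  obtain ⟨k, rfl⟩ := Nat.exists_eq_add_of_le hmn
  rw [add_comm, Function.iterate_add_apply, h, Function.iterate_fixed (map_zero D)]

/-- The degree function `deg_D` of a locally nilpotent derivation: `deg_D a = n`. -/
structure HasLNDDegree (a : A) (n : ℕ) : Prop where
  iterate_ne_zero : (⇑D)^[n] a ≠ 0
  iterate_succ_eq_zero : (⇑D)^[n + 1] a = 0

variable {D}

theorem HasLNDDegree.unique {a : A} {m n : ℕ} (hm : HasLNDDegree D a m)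
    (hn : HasLNDDegree D a n) : m = n := by
  by_contra hne
  rcases Nat.lt_or_gt_of_ne hne with h | h
  · exact hn.iterate_ne_zero (D.iterate_eq_zero_of_le hm.iterate_succ_eq_zero h)
  · exact hm.iterate_ne_zero (D.iterate_eq_zero_of_le hn.iterate_succ_eq_zero h)

theorem hasLNDDegree_succ_iff {a : A} {n : ℕ} :
    HasLNDDegree D a (n + 1) ↔ HasLNDDegree D (D a) n :=
  ⟨fun ⟨h, h'⟩ => ⟨h, h'⟩, fun ⟨h, h'⟩ => ⟨h, h'⟩⟩

theorem hasLNDDegree_zero_iff {a : A} : HasLNDDegree D a 0 ↔ a ≠ 0 ∧ D a = 0 :=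
  ⟨fun ⟨h, h'⟩ => ⟨h, h'⟩, fun ⟨h, h'⟩ => ⟨h, h'⟩⟩

theorem exists_hasLNDDegree {a : A} (ha : a ≠ 0) (hnil : ∃ n, (⇑D)^[n] a = 0) :
    ∃ n, HasLNDDegree D a n := by
  classical
  have hpos : 0 < Nat.find hnil :=
    Nat.pos_of_ne_zero fun h => ha (by simpa [h] using Nat.find_spec hnil)
  refine ⟨Nat.find hnil - 1, Nat.find_min hnil (by omega), ?_⟩
  rw [Nat.sub_add_cancel hpos]
  exact Nat.find_spec hnil

variable [IsDomain A] [CharZero A]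

theorem HasLNDDegree.mul {a b : A} {m n : ℕ} (ha : HasLNDDegree D a m)
    (hb : HasLNDDegree D b n) : HasLNDDegree D (a * b) (m + n) := by
  have vanish : ∀ i j, m < i ∨ n < j → (⇑D)^[i] a * (⇑D)^[j] b = 0 := by
    rintro i j (h | h)
    · rw [D.iterate_eq_zero_of_le ha.iterate_succ_eq_zero h, zero_mul]
    · rw [D.iterate_eq_zero_of_le hb.iterate_succ_eq_zero h, mul_zero]
  constructor
  · rw [D.iterate_apply_mul, sum_eq_single (m, n)]
    · exact smul_ne_zero (Nat.choose_pos (Nat.le_add_right m n)).ne'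
        (mul_ne_zero ha.iterate_ne_zero hb.iterate_ne_zero)
    · rintro ⟨i, j⟩ hij hne
      rw [vanish i j (by grind [mem_antidiagonal.1 hij]), smul_zero]
    · simp
  · rw [D.iterate_apply_mul]
    refine sum_eq_zero fun ⟨i, j⟩ hij => ?_
    rw [vanish i j (by grind [mem_antidiagonal.1 hij]), smul_zero]

theorem HasLNDDegree.pow {a : A} {m : ℕ} (ha : HasLNDDegree D a m) (k : ℕ) :
    HasLNDDegree D (a ^ k) (k * m) := by
  induction k with
  | zero => simp [hasLNDDegree_zero_iff]
  | succ k ih => simpa [pow_succ, add_mul] using ih.mul ha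

theorem apply_eq_zero_of_apply_mem_span_singleton (hnil : ∀ a, ∃ n, (⇑D)^[n] a = 0) {f : A}
    (hf : D f ∈ Ideal.span {f}) : D f = 0 := by
  obtain ⟨g, hg⟩ := Ideal.mem_span_singleton'.1 hf
  by_contra hDf
  have hf0 : f ≠ 0 := by rintro rfl; exact hDf (map_zero D)
  have hg0 : g ≠ 0 := by rintro rfl; exact hDf (by rw [← hg, zero_mul])
  obtain ⟨m, hm⟩ := exists_hasLNDDegree hf0 (hnil f)
  obtain ⟨k, hk⟩ := exists_hasLNDDegree hg0 (hnil g)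
  -- `D` lowers the degree of `f`, multiplication by `g ≠ 0` cannot
  refine (hk.mul hm).iterate_ne_zero (D.iterate_eq_zero_of_le ?_ (Nat.le_add_left m k))
  rw [hg]
  exact hm.iterate_succ_eq_zero

theorem eq_zero_of_apply_eq_mul_of_apply_eq_mul_sq (hnil : ∀ a, ∃ n, (⇑D)^[n] a = 0)
    {x y u b : A} (hx : x ≠ 0) (hy : y ≠ 0) (hu : HasLNDDegree D u 0)
    (hDy : D y = x * b) (hDx : D x = u * y ^ 2 * b) : b = 0 := by
  by_contra hb
  obtain ⟨p, hp⟩ := exists_hasLNDDegree hx (hnil x)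
  obtain ⟨q, hq⟩ := exists_hasLNDDegree hy (hnil y)
  obtain ⟨r, hr⟩ := exists_hasLNDDegree hb (hnil b)
  have hpq : p = 0 + 2 * q + r + 1 :=
    hp.unique (hasLNDDegree_succ_iff.2 (hDx ▸ (hu.mul (hq.pow 2)).mul hr))
  have hqp : q = p + r + 1 := hq.unique (hasLNDDegree_succ_iff.2 (hDy ▸ hp.mul hr))
  omega

end Derivation

theorem MvPolynomial.exists_apply_X_eq_of_apply_X_sq_add_X_cube_eq_zero
    {K : Type*} [Field K] [CharZero K]
    (D : Derivation K (MvPolynomial (Fin 2) K) (MvPolynomial (Fin 2) K))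
    (h : D (X 0 ^ 2 + X 1 ^ 3) = 0) :
    ∃ b, D (X 1) = X 0 * b ∧ D (X 0) = C (-3 / 2) * X 1 ^ 2 * b := by
  have hrel : 2 * X 0 * D (X 0) + 3 * X 1 ^ 2 * D (X 1) = 0 := by
    rw [map_add, D.leibniz_pow, D.leibniz_pow] at h
    simp only [nsmul_eq_mul, smul_eq_mul, Nat.cast_ofNat] at h
    linear_combination h
  have hndvd : ¬ X 0 ∣ (3 * X 1 ^ 2 : MvPolynomial (Fin 2) K) := by
    rintro ⟨u, hu⟩
    simpa using congrArg (eval ![0, 1]) hu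
  have hdvd : X 0 ∣ 3 * X 1 ^ 2 * D (X 1) := ⟨-(2 * D (X 0)), by linear_combination hrel⟩
  obtain ⟨b, hb⟩ := (X_prime.dvd_or_dvd hdvd).resolve_left hndvd
  refine ⟨b, hb, mul_left_cancel₀ two_ne_zero ?_⟩
  have hsum : X 0 * (2 * D (X 0) + 3 * X 1 ^ 2 * b) = 0 := by
    linear_combination hrel - 3 * X 1 ^ 2 * hb
  have hC : (2 * C (-3 / 2) : MvPolynomial (Fin 2) K) = -3 := by
    rw [← map_ofNat C 2, ← map_ofNat C 3, ← map_mul, ← map_neg]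
    norm_num
  linear_combination (mul_eq_zero.1 hsum).resolve_left (X_ne_zero 0) - X 1 ^ 2 * b * hC

/-- Every locally nilpotent derivation D of ℂ[z,t] with D(z²+t³) ∈ (z²+t³) is zero. -/
theorem stmt11
    (D : Derivation ℂ (MvPolynomial (Fin 2) ℂ) (MvPolynomial (Fin 2) ℂ))
    (hln : ∀ f : MvPolynomial (Fin 2) ℂ, ∃ n : ℕ, (fun g => D g)^[n] f = 0)
    (hD : D (X 0 ^ 2 + X 1 ^ 3) ∈
      Ideal.span {(X 0 ^ 2 + X 1 ^ 3 : MvPolynomial (Fin 2) ℂ)}) :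
    D = 0 := by
  obtain ⟨b, hDt, hDz⟩ := exists_apply_X_eq_of_apply_X_sq_add_X_cube_eq_zero D
    (D.apply_eq_zero_of_apply_mem_span_singleton hln hD)
  have hC : Derivation.HasLNDDegree D (C (-3 / 2)) 0 :=
    Derivation.hasLNDDegree_zero_iff.2
      ⟨by simp, by rw [← algebraMap_eq]; exact D.map_algebraMap _⟩
  have hb : b = 0 :=
    D.eq_zero_of_apply_eq_mul_of_apply_eq_mul_sq hln (X_ne_zero 0) (X_ne_zero 1) hC hDt hDz
  ext i
  fin_cases i <;> simp [hDt, hDz, hb]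
end

section
/- Let λ, μ ∈ ℂ*. The hypersurface V(λ(x²y+z²+x+t³) - μx) ⊂ ℂ⁴ has a singular point if and only if λ = μ. -/
open MvPolynomial

theorem stmt15_general (lam mu : ℂ) (hlam : lam ≠ 0) :
    (∃ p : Fin 4 → ℂ,
        eval p (C lam * (X 0 ^ 2 * X 1 + X 2 ^ 2 + X 0 + X 3 ^ 3) - C mu * X 0) = 0 ∧
        ∀ i : Fin 4,
          eval p (pderiv i
            (C lam * (X 0 ^ 2 * X 1 + X 2 ^ 2 + X 0 + X 3 ^ 3) - C mu * X 0)) = 0) ↔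
      lam = mu := by
  constructor
  · -- `∂G/∂y = λx²` forces `x = 0`, and there `∂G/∂x = λ - μ`.
    rintro ⟨p, -, hgrad⟩
    have hy := hgrad 1
    have hx := hgrad 0
    simp [pderiv_X] at hy hx
    have hp0 : p 0 = 0 := hy.resolve_left hlam
    simpa [hp0, sub_eq_zero] using hx
  · rintro rfl
    refine ⟨0, by simp, fun i => ?_⟩
    fin_cases i <;> simp [pderiv_X]

/-- V(λ(x²y+z²+x+t³) - μx) has a singular point iff λ = μ. -/
theorem stmt15 (lam mu : ℂ) (hlam : lam ≠ 0) (hmu : mu ≠ 0) :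
    (∃ p : Fin 4 → ℂ,
        eval p (C lam * (X 0 ^ 2 * X 1 + X 2 ^ 2 + X 0 + X 3 ^ 3) - C mu * X 0) = 0 ∧
        ∀ i : Fin 4,
          eval p (pderiv i
            (C lam * (X 0 ^ 2 * X 1 + X 2 ^ 2 + X 0 + X 3 ^ 3) - C mu * X 0)) = 0) ↔
      lam = mu :=
  stmt15_general lam mu hlam
end
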